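/- For 0 < α < 1, consider the subharmonic function u^α(z) := −(−log|z|)^α on the disc {|z| < 1−ε} in ℂ. Then the L¹-energy E₁(u^α) := ∫ (−u^α) dd^c u^α is finite when α < 1/2 and infinite when 1/2 ≤ α < 1. -/

import Mathlib

/-!
Test the Riesz identity against radial functions `φ = H (-log ‖z‖)` with `H` smooth and supported
in `(-log R, ∞)`. Since `Δφ = H''(t) e^{2t}` for `t = -log ‖z‖`, polar coordinates and two
integrations by parts give `∫ φ dμ = α (1 - α) ∫ t ^ (α - 2) H(t) dt`: the push-forward of `μ`
under `-log ‖z‖` has density `α (1 - α) t ^ (α - 2)` on `(-log R, ∞)`. Letting `H(t) = t ^ α χₙ(t)`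
for smooth cutoffs `χₙ` increasing to the indicator of `(-log R, ∞)`, monotone convergence gives
`E₁(u^α) = α (1 - α) ∫_{-log R}^∞ t ^ (2α - 2) dt`, which is finite iff `2α - 2 < -1`.
-/

open Filter MeasureTheory Metric Set
open scoped ENNReal Topology

noncomputable section

/-- `μ` is the Riesz measure `dd^c u` of a (negative subharmonic) function `u` on the planar
domain `D`, normalized so that `dd^c log|z| = δ₀`: for every smooth compactly supported test
function `φ` with support in `D`, `∫ u Δφ = 2π ∫ φ dμ`. -/
def IsRieszMeasureOn (D : Set ℂ) (u : ℂ → ℝ) (μ : Measure ℂ) : Prop :=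
  ∀ φ : ℂ → ℝ, ContDiff ℝ (⊤ : ℕ∞) φ → HasCompactSupport φ → tsupport φ ⊆ D →
    ∫ z : ℂ, u z * (iteratedFDeriv ℝ 2 φ z ![1, 1]
        + iteratedFDeriv ℝ 2 φ z ![Complex.I, Complex.I])
      = 2 * Real.pi * ∫ z : ℂ, φ z ∂μ

open InnerProductSpace Laplacian
open scoped Interval ContDiff

theorem laplacian_comp_norm_sq {E : Type*} [NormedAddCommGroup E] [InnerProductSpace ℝ E]
    [FiniteDimensional ℝ E] {J J' J'' : ℝ → ℝ} {x : E}
    (hJ : ∀ᶠ q in 𝓝 (‖x‖ ^ 2), HasDerivAt J (J' q) q)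
    (hJ' : HasDerivAt J' (J'' (‖x‖ ^ 2)) (‖x‖ ^ 2)) :
    Δ (fun y : E => J (‖y‖ ^ 2)) x =
      4 * ‖x‖ ^ 2 * J'' (‖x‖ ^ 2) + 2 * Module.finrank ℝ E * J' (‖x‖ ^ 2) := by
  have hfderiv : fderiv ℝ (fun y => J (‖y‖ ^ 2)) =ᶠ[𝓝 x]
      fun y => J' (‖y‖ ^ 2) • (2 • innerSL ℝ y) := by
    have hcont : Tendsto (fun y : E => ‖y‖ ^ 2) (𝓝 x) (𝓝 (‖x‖ ^ 2)) :=
      (continuous_norm.pow 2).tendsto x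
    filter_upwards [hcont.eventually hJ] with y hy
    exact (hy.comp_hasFDerivAt y (hasStrictFDerivAt_norm_sq y).hasFDerivAt).fderiv
  have hsecond : HasFDerivAt (fun y => J' (‖y‖ ^ 2) • (2 • innerSL ℝ y))
      (J' (‖x‖ ^ 2) • (2 • innerSL ℝ (E := E))
        + (J'' (‖x‖ ^ 2) • (2 • innerSL ℝ x)).smulRight (2 • innerSL ℝ x)) x :=
    (hJ'.comp_hasFDerivAt x (hasStrictFDerivAt_norm_sq x).hasFDerivAt).smul
      ((innerSL ℝ).hasFDerivAt.const_smul 2)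
  let b := stdOrthonormalBasis ℝ E
  rw [laplacian_eq_iteratedFDeriv_orthonormalBasis _ b]
  simp only [iteratedFDeriv_two_apply, hfderiv.fderiv_eq, hsecond.fderiv, add_apply, smul_apply, ContinuousLinearMap.smulRight_apply, innerSL_apply_apply,
    Matrix.cons_val_zero, Matrix.cons_val_one, smul_eq_mul, nsmul_eq_mul, Finset.sum_add_distrib]
  have hb (i) : innerSL ℝ (b i) (b i) = 1 := by simp [b.orthonormal.1 i]
  have hsq : ∑ i, J'' (‖x‖ ^ 2) * (2 * ⟪x, b i⟫_ℝ) * (2 * ⟪x, b i⟫_ℝ)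
      = 4 * J'' (‖x‖ ^ 2) * ∑ i, ⟪x, b i⟫_ℝ ^ 2 := by
    rw [Finset.mul_sum]
    exact Finset.sum_congr rfl fun i _ => by ring
  simp only [hb, Finset.sum_const, Finset.card_univ, Fintype.card_fin, nsmul_eq_mul, Nat.cast_ofNat,
    hsq, b.sum_sq_inner_left]
  ring

theorem laplacian_comp_neg_log_norm {H : ℝ → ℝ} (hH : ContDiff ℝ 2 H) {z : ℂ} (hz : z ≠ 0) :
    Δ (fun w : ℂ => H (-Real.log ‖w‖)) z = deriv (deriv H) (-Real.log ‖z‖) / ‖z‖ ^ 2 := by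
  obtain ⟨hH1, -, hH2⟩ := (contDiff_succ_iff_deriv (n := 1)).mp hH
  -- `H (-log ‖w‖) = J (‖w‖ ^ 2)` with `J = H ∘ s`
  set s : ℝ → ℝ := fun q => -Real.log q / 2
  have hs {q : ℝ} (hq : q ≠ 0) : HasDerivAt s (-(2 * q)⁻¹) q :=
    ((Real.hasDerivAt_log hq).neg.div_const 2).congr_deriv (by ring)
  have hq : ‖z‖ ^ 2 ≠ 0 := by positivity
  have hJ : ∀ᶠ q in 𝓝 (‖z‖ ^ 2),
      HasDerivAt (fun q => H (s q)) (deriv H (s q) * -(2 * q)⁻¹) q := by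
    filter_upwards [isOpen_ne.mem_nhds hq] with q hq
    exact (hH1 _).hasDerivAt.comp q (hs hq)
  set J'' : ℝ → ℝ := fun q =>
    deriv (deriv H) (s q) * (2 * q)⁻¹ ^ 2 + deriv H (s q) * (2 * q ^ 2)⁻¹
  have hJ' : HasDerivAt (fun q => deriv H (s q) * -(2 * q)⁻¹) (J'' (‖z‖ ^ 2)) (‖z‖ ^ 2) := by
    have hinv : HasDerivAt (fun q : ℝ => -(2 * q)⁻¹) (2 * (‖z‖ ^ 2) ^ 2)⁻¹ (‖z‖ ^ 2) :=
      (((hasDerivAt_id (‖z‖ ^ 2)).const_mul 2).fun_inv (mul_ne_zero two_ne_zero hq)).fun_neg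
        |>.congr_deriv (by simp only [id]; field_simp)
    exact (((hH2.differentiable one_ne_zero _).hasDerivAt.comp _ (hs hq)).mul hinv).congr_deriv
      (by simp only [J'', Function.comp_apply]; field_simp)
  have hfun : (fun w : ℂ => H (-Real.log ‖w‖)) = fun w => H (s (‖w‖ ^ 2)) := by
    ext w; simp only [s, Real.log_pow]; congr 1; push_cast; ring
  have hsz : s (‖z‖ ^ 2) = -Real.log ‖z‖ := by simp only [s, Real.log_pow]; push_cast; ring
  rw [hfun, laplacian_comp_norm_sq hJ hJ', Complex.finrank_real_complex]
  simp only [J'', hsz]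
  field_simp
  ring

theorem integral_comp_neg_log_norm {F : Type*} [NormedAddCommGroup F] [NormedSpace ℝ F]
    (f : ℝ → F) :
    ∫ z : ℂ, f (-Real.log ‖z‖) = (2 * Real.pi) • ∫ t, Real.exp (-2 * t) • f t := by
  have hball : volume.real (ball (0 : ℂ) 1) = Real.pi := by
    simp [Measure.real, Complex.volume_ball]
  have hexp : ∫ y in Ioi 0, y • f (-Real.log y) = ∫ x, Real.exp (2 * x) • f (-x) := by
    rw [← Real.range_exp, ← image_univ, integral_image_eq_integral_abs_deriv_smul MeasurableSet.univ
      (fun x _ => (Real.hasDerivAt_exp x).hasDerivWithinAt) Real.exp_injective.injOn]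
    simp only [abs_of_pos (Real.exp_pos _), smul_smul, Real.log_exp, Measure.restrict_univ,
      ← Real.exp_add, two_mul]
  rw [integral_fun_norm_addHaar volume (fun y => f (-Real.log y)), Complex.finrank_real_complex,
    hball]
  simp only [Nat.add_one_sub_one, pow_one]
  rw [hexp, ← integral_neg_eq_self (fun t => Real.exp (-2 * t) • f t)]
  simp only [neg_mul_neg, mul_smul, ofNat_smul_eq_nsmul]

theorem integral_mul_deriv_eq_neg_of_eq_zero {u u' g : ℝ → ℝ} {a b : ℝ}
    (hu : ∀ x ∈ [[a, b]], HasDerivAt u (u' x) x) (hu' : IntervalIntegrable u' volume a b)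
    (hg : ContDiff ℝ 1 g) (ha : g a = 0) (hb : g b = 0) :
    ∫ x in a..b, u x * deriv g x = -∫ x in a..b, u' x * g x := by
  rw [intervalIntegral.integral_mul_deriv_eq_deriv_mul hu
    (fun x _ => (hg.differentiable one_ne_zero x).hasDerivAt) hu'
    ((hg.continuous_deriv le_rfl).intervalIntegrable _ _), ha, hb]
  ring

theorem integral_rpow_mul_deriv_deriv {H : ℝ → ℝ} (hH : ContDiff ℝ 2 H) {a b : ℝ} (ha : 0 < a)
    (hsupp : tsupport H ⊆ Icc a b) (α : ℝ) :
    ∫ t, t ^ α * deriv (deriv H) t = α * (α - 1) * ∫ t, t ^ (α - 2) * H t := by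
  obtain ⟨-, -, hH1⟩ := (contDiff_succ_iff_deriv (n := 1)).mp hH
  have hsupp1 : tsupport (deriv H) ⊆ Icc a b := tsupport_deriv_subset.trans hsupp
  obtain ⟨t₁, t₂, ht₁, hIcc, ht₁₂⟩ : ∃ t₁ t₂, 0 < t₁ ∧ Icc a b ⊆ Ioo t₁ t₂ ∧ t₁ ≤ t₂ :=
    ⟨a / 2, max a b + 1, by positivity,
      fun t ht => ⟨by linarith [ht.1], by linarith [ht.2, le_max_right a b]⟩,
      by linarith [le_max_left a b]⟩
  have hne : ∀ x ∈ [[t₁, t₂]], x ≠ 0 := by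
    intro x hx
    rw [uIcc_of_le ht₁₂] at hx
    exact (ht₁.trans_le hx.1).ne'
  have hend {f : ℝ → ℝ} (hf : tsupport f ⊆ Icc a b) : f t₁ = 0 ∧ f t₂ = 0 :=
    ⟨image_eq_zero_of_notMem_tsupport fun h => (hIcc (hf h)).1.ne rfl,
      image_eq_zero_of_notMem_tsupport fun h => (hIcc (hf h)).2.ne rfl⟩
  have hinterval {f : ℝ → ℝ} (hf : tsupport f ⊆ Icc a b) (g : ℝ → ℝ) :
      ∫ t in t₁..t₂, g t * f t = ∫ t, g t * f t :=
    intervalIntegral.integral_eq_integral_of_support_subset fun t ht =>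
      Ioo_subset_Ioc_self (hIcc (hf (subset_tsupport _ (right_ne_zero_of_mul ht))))
  have hrpow (p : ℝ) : ∀ x ∈ [[t₁, t₂]], HasDerivAt (fun x => x ^ p) (p * x ^ (p - 1)) x :=
    fun x hx => Real.hasDerivAt_rpow_const (Or.inl (hne x hx))
  have hint (p c : ℝ) : IntervalIntegrable (fun x => c * x ^ p) volume t₁ t₂ :=
    (intervalIntegral.intervalIntegrable_rpow (Or.inr fun h => hne 0 h rfl)).const_mul c
  rw [← hinterval (tsupport_deriv_subset.trans hsupp1),
    integral_mul_deriv_eq_neg_of_eq_zero (hrpow α) (hint _ _) hH1 (hend hsupp1).1 (hend hsupp1).2,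
    integral_mul_deriv_eq_neg_of_eq_zero (fun x hx => (hrpow (α - 1) x hx).const_mul α)
      ((hint _ (α - 1)).const_mul α) (hH.of_le one_le_two) (hend hsupp).1 (hend hsupp).2,
    ← hinterval hsupp, neg_neg, ← intervalIntegral.integral_const_mul]
  exact intervalIntegral.integral_congr fun x _ => by ring_nf

theorem tsupport_comp_neg_log_norm_subset {E : Type*} [NormedAddCommGroup E] {H : ℝ → ℝ}
    {a b : ℝ} (ha : 0 < a) (hsupp : tsupport H ⊆ Icc a b) :
    tsupport (fun x : E => H (-Real.log ‖x‖)) ⊆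
      closedBall 0 (Real.exp (-a)) \ ball 0 (Real.exp (-b)) := by
  refine closure_minimal (fun x hx => ?_)
    (isClosed_closedBall.inter isOpen_ball.isClosed_compl)
  obtain ⟨hax, hxb⟩ := hsupp (subset_tsupport _ hx)
  have hx0 : 0 < ‖x‖ := by
    by_contra! h
    rw [norm_le_zero_iff.mp h, norm_zero, Real.log_zero] at hax
    linarith
  simp only [Set.mem_sdiff, mem_closedBall, mem_ball, dist_zero_right, not_lt]
  constructor
  · rw [← Real.exp_log hx0]; exact Real.exp_le_exp.mpr (by linarith)
  · rw [← Real.exp_log hx0]; exact Real.exp_le_exp.mpr (by linarith)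

theorem hasCompactSupport_comp_neg_log_norm {E : Type*} [NormedAddCommGroup E] [ProperSpace E]
    {H : ℝ → ℝ} {a b : ℝ} (ha : 0 < a) (hsupp : tsupport H ⊆ Icc a b) :
    HasCompactSupport (fun x : E => H (-Real.log ‖x‖)) :=
  (isCompact_closedBall 0 _).of_isClosed_subset (isClosed_tsupport _)
    ((tsupport_comp_neg_log_norm_subset ha hsupp).trans sdiff_subset)

theorem contDiff_comp_neg_log_norm {E : Type*} [NormedAddCommGroup E] [InnerProductSpace ℝ E]
    {n : WithTop ℕ∞} {H : ℝ → ℝ} (hH : ContDiff ℝ n H) {a b : ℝ} (ha : 0 < a)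
    (hsupp : tsupport H ⊆ Icc a b) :
    ContDiff ℝ n (fun x : E => H (-Real.log ‖x‖)) := by
  refine contDiff_iff_contDiffAt.mpr fun x => ?_
  rcases eq_or_ne x 0 with rfl | hx
  · have h0 : (0 : E) ∉ tsupport (fun x : E => H (-Real.log ‖x‖)) := fun h =>
      ((tsupport_comp_neg_log_norm_subset ha hsupp h).2 (mem_ball_self (Real.exp_pos _)))
    exact contDiffAt_const.congr_of_eventuallyEq (notMem_tsupport_iff_eventuallyEq.mp h0)
  · exact hH.contDiffAt.comp x
      ((Real.contDiffAt_log.mpr (norm_ne_zero_iff.mpr hx)).comp x (contDiffAt_norm ℝ hx)).neg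

theorem integral_comp_neg_log_norm_of_isRieszMeasureOn {α R : ℝ} {μ : Measure ℂ}
    (hμ : IsRieszMeasureOn (ball 0 R) (fun z => -(-Real.log ‖z‖) ^ α) μ)
    {H : ℝ → ℝ} (hH : ContDiff ℝ ∞ H) {a b : ℝ} (ha : 0 < a) (haR : Real.exp (-a) < R)
    (hsupp : tsupport H ⊆ Icc a b) :
    ∫ z, H (-Real.log ‖z‖) ∂μ = α * (1 - α) * ∫ t, t ^ (α - 2) * H t := by
  set φ : ℂ → ℝ := fun z => H (-Real.log ‖z‖)
  have hH2 : ContDiff ℝ 2 H := hH.of_le (by norm_cast)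
  have hRiesz := hμ φ (contDiff_comp_neg_log_norm hH ha hsupp)
    (hasCompactSupport_comp_neg_log_norm ha hsupp)
    ((tsupport_comp_neg_log_norm_subset ha hsupp).trans
      (sdiff_subset.trans (closedBall_subset_ball haR)))
  set F : ℝ → ℝ := fun t => -(t ^ α * deriv (deriv H) t * Real.exp (2 * t))
  have hpt (z : ℂ) : -(-Real.log ‖z‖) ^ α * (iteratedFDeriv ℝ 2 φ z ![1, 1]
        + iteratedFDeriv ℝ 2 φ z ![Complex.I, Complex.I]) = F (-Real.log ‖z‖) := by
    rw [← congrFun (laplacian_eq_iteratedFDeriv_complexPlane φ) z]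
    rcases eq_or_ne z 0 with rfl | hz
    · -- `Real.log 0 = 0`, so the right-hand side is `F 0`, which vanishes since `0 < a`
      have h0 : (0 : ℂ) ∉ tsupport φ := fun h =>
        ((tsupport_comp_neg_log_norm_subset ha hsupp h).2 (mem_ball_self (Real.exp_pos _)))
      have hH0 : deriv (deriv H) 0 = 0 := image_eq_zero_of_notMem_tsupport fun h =>
        (tsupport_deriv_subset.trans (tsupport_deriv_subset.trans hsupp) h).1.not_gt ha
      rw [(laplacian_congr_nhds (notMem_tsupport_iff_eventuallyEq.mp h0)).eq_of_nhds]
      simp [F, hH0, Pi.zero_def]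
    · have hexp : Real.exp (2 * -Real.log ‖z‖) = (‖z‖ ^ 2)⁻¹ := by
        rw [mul_neg, Real.exp_neg, ← Real.log_rpow (norm_pos_iff.mpr hz),
          Real.exp_log (by positivity)]
        norm_cast
      rw [laplacian_comp_neg_log_norm hH2 hz]
      simp only [F, hexp]
      ring
  have hF (t : ℝ) : Real.exp (-2 * t) • F t = -(t ^ α * deriv (deriv H) t) := by
    simp only [F, smul_eq_mul]
    rw [mul_neg, mul_comm, mul_assoc, ← Real.exp_add]
    simp
  rw [funext hpt, integral_comp_neg_log_norm F, funext hF, integral_neg,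
    integral_rpow_mul_deriv_deriv hH2 ha hsupp] at hRiesz
  have hpi : 2 * Real.pi ≠ 0 := by positivity
  apply mul_left_cancel₀ hpi
  linear_combination -hRiesz

theorem ContDiff.rpow_const_mul_of_tsupport_subset {n : WithTop ℕ∞} {χ : ℝ → ℝ}
    (hχ : ContDiff ℝ n χ) (hsupp : tsupport χ ⊆ Ioi 0) (p : ℝ) :
    ContDiff ℝ n (fun t => t ^ p * χ t) := by
  refine contDiff_iff_contDiffAt.mpr fun t => ?_
  by_cases ht : t ∈ tsupport χ
  · exact (Real.contDiffAt_rpow_const_of_ne (hsupp ht).ne').mul hχ.contDiffAt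
  · refine (contDiffAt_const (c := 0)).congr_of_eventuallyEq ?_
    filter_upwards [notMem_tsupport_iff_eventuallyEq.mp ht] with s hs
    simp [hs]

theorem lintegral_comp_neg_log_norm_of_isRieszMeasureOn {α R : ℝ} (hα0 : 0 ≤ α) (hα1 : α ≤ 1)
    {μ : Measure ℂ} [IsFiniteMeasureOnCompacts μ]
    (hμ : IsRieszMeasureOn (ball 0 R) (fun z => -(-Real.log ‖z‖) ^ α) μ)
    {H : ℝ → ℝ} (hH : ContDiff ℝ ∞ H) (hH0 : ∀ t, 0 ≤ H t) {a b : ℝ} (ha : 0 < a)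
    (haR : Real.exp (-a) < R) (hsupp : tsupport H ⊆ Icc a b) :
    ∫⁻ z, ENNReal.ofReal (H (-Real.log ‖z‖)) ∂μ =
      ∫⁻ t, ENNReal.ofReal (α * (1 - α) * (t ^ (α - 2) * H t)) := by
  have hpos : tsupport H ⊆ Ioi 0 := hsupp.trans fun t ht => ha.trans_le ht.1
  have hcompact : HasCompactSupport H :=
    isCompact_Icc.of_isClosed_subset (isClosed_tsupport H) hsupp
  have hweighted_nonneg (t : ℝ) : 0 ≤ t ^ (α - 2) * H t := by
    by_cases ht : t ∈ tsupport H
    · exact mul_nonneg (Real.rpow_nonneg (hpos ht).le _) (hH0 t)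
    · simp [image_eq_zero_of_notMem_tsupport ht]
  rw [← ofReal_integral_eq_lintegral_ofReal
      ((contDiff_comp_neg_log_norm hH ha hsupp).continuous.integrable_of_hasCompactSupport
        (hasCompactSupport_comp_neg_log_norm ha hsupp))
      (ae_of_all _ fun z => hH0 _),
    ← ofReal_integral_eq_lintegral_ofReal
      (((hH.rpow_const_mul_of_tsupport_subset hpos (α - 2)).continuous
        |>.integrable_of_hasCompactSupport hcompact.mul_left).const_mul _)
      (ae_of_all _ fun t =>
        mul_nonneg (mul_nonneg hα0 (sub_nonneg.mpr hα1)) (hweighted_nonneg t)),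
    integral_const_mul, integral_comp_neg_log_norm_of_isRieszMeasureOn hμ hH ha haR hsupp]

theorem lintegral_Ioi_ofReal_const_mul_rpow_lt_top_iff {c k p : ℝ} (hc : 0 < c) (hk : 0 < k) :
    ∫⁻ t in Ioi c, ENNReal.ofReal (k * t ^ p) < ⊤ ↔ p < -1 := by
  have hmeas : AEStronglyMeasurable (fun t : ℝ => k * t ^ p) (volume.restrict (Ioi c)) :=
    ((measurable_id.pow_const p).const_mul k).aestronglyMeasurable
  have hnonneg : 0 ≤ᵐ[volume.restrict (Ioi c)] fun t : ℝ => k * t ^ p :=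
    (ae_restrict_mem measurableSet_Ioi).mono fun t ht =>
      mul_nonneg hk.le (Real.rpow_nonneg (hc.trans ht).le _)
  rw [← integrableOn_Ioi_rpow_iff hc, IntegrableOn,
    ← integrable_const_mul_iff (isUnit_iff_ne_zero.mpr hk.ne'), Integrable,
    hasFiniteIntegral_iff_ofReal hnonneg, and_iff_right hmeas]

def smoothCutoff (c : ℝ) (n : ℕ) (t : ℝ) : ℝ :=
  Real.smoothTransition ((n + 1) * (t - c) - 1) * Real.smoothTransition (n + 1 - t)

namespace smoothCutoff

variable {c t : ℝ} {n : ℕ}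

theorem nonneg : 0 ≤ smoothCutoff c n t :=
  mul_nonneg (Real.smoothTransition.nonneg _) (Real.smoothTransition.nonneg _)

theorem contDiff : ContDiff ℝ ∞ (smoothCutoff c n) :=
  (Real.smoothTransition.contDiff.comp (by fun_prop)).mul
    (Real.smoothTransition.contDiff.comp (by fun_prop))

theorem tsupport_subset : tsupport (smoothCutoff c n) ⊆ Icc (c + 1 / (n + 1)) (n + 1) := by
  refine closure_minimal (fun t ht => ?_) isClosed_Icc
  have h₁ := not_le.mp (mt Real.smoothTransition.zero_of_nonpos (left_ne_zero_of_mul ht))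
  have h₂ := not_le.mp (mt Real.smoothTransition.zero_of_nonpos (right_ne_zero_of_mul ht))
  constructor
  · rw [← sub_nonneg, ← mul_nonneg_iff_of_pos_left (by positivity : (0 : ℝ) < n + 1)]
    field_simp
    linarith
  · linarith

theorem of_le (ht : t ≤ c) : smoothCutoff c n t = 0 := by
  have : (n + 1) * (t - c) - 1 ≤ 0 := by nlinarith
  simp [smoothCutoff, Real.smoothTransition.zero_of_nonpos this]

theorem eventually_eq_one (ht : c < t) : ∀ᶠ n : ℕ in atTop, smoothCutoff c n t = 1 := by
  obtain ⟨N, hN⟩ := exists_nat_ge (max t (2 / (t - c)))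
  filter_upwards [eventually_ge_atTop N] with n hn
  have hn' : max t (2 / (t - c)) ≤ n := hN.trans (by exact_mod_cast hn)
  have h₁ : 1 ≤ (n + 1) * (t - c) - 1 := by
    have := (div_le_iff₀ (sub_pos.mpr ht)).mp ((le_max_right _ _).trans hn')
    nlinarith
  rw [smoothCutoff, Real.smoothTransition.one_of_one_le h₁,
    Real.smoothTransition.one_of_one_le (by linarith [le_max_left t (2 / (t - c))]), one_mul]

theorem monotone (c t : ℝ) : Monotone fun n => smoothCutoff c n t := by
  rcases le_or_gt t c with ht | ht
  · intro m n _; simp [of_le ht]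
  refine fun m n hmn => mul_le_mul ?_ ?_ (Real.smoothTransition.nonneg _)
    (Real.smoothTransition.nonneg _) <;> apply Real.smoothTransition.monotone
  · have : (m : ℝ) ≤ n := by exact_mod_cast hmn
    nlinarith
  · have : (m : ℝ) ≤ n := by exact_mod_cast hmn
    linarith

end smoothCutoff

theorem tendsto_lintegral_mul_smoothCutoff {X : Type*} [MeasurableSpace X] (ν : Measure X)
    {s : X → ℝ} (hs : Measurable s) {G : X → ℝ≥0∞} (hG : Measurable G) (c : ℝ) :
    Tendsto (fun n : ℕ => ∫⁻ x, G x * ENNReal.ofReal (smoothCutoff c n (s x)) ∂ν) atTop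
      (𝓝 (∫⁻ x in s ⁻¹' Ioi c, G x ∂ν)) := by
  rw [← lintegral_indicator (hs measurableSet_Ioi)]
  refine lintegral_tendsto_of_tendsto_of_monotone (fun n => ?_) (ae_of_all _ fun x => ?_)
    (ae_of_all _ fun x => ?_)
  · exact (hG.mul (ENNReal.measurable_ofReal.comp
      (smoothCutoff.contDiff.continuous.measurable.comp hs))).aemeasurable
  · exact fun m n hmn => mul_le_mul_right (ENNReal.ofReal_le_ofReal
      (smoothCutoff.monotone c (s x) hmn)) _
  · by_cases hx : c < s x
    · rw [indicator_of_mem (show x ∈ s ⁻¹' Ioi c from hx)]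
      refine tendsto_const_nhds.congr' ?_
      filter_upwards [smoothCutoff.eventually_eq_one hx] with n hn
      simp [hn]
    · rw [indicator_of_notMem (show x ∉ s ⁻¹' Ioi c from hx)]
      simp [smoothCutoff.of_le (not_lt.mp hx)]

theorem setLIntegral_ball_eq_preimage_neg_log_norm {R : ℝ} (hR : 0 < R) (μ : Measure ℂ)
    {G : ℂ → ℝ≥0∞} (hG : G 0 = 0) :
    ∫⁻ z in ball 0 R, G z ∂μ =
      ∫⁻ z in (fun z : ℂ => -Real.log ‖z‖) ⁻¹' Ioi (-Real.log R), G z ∂μ := by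
  classical
  have hs : Measurable fun z : ℂ => -Real.log ‖z‖ := (Real.measurable_log.comp measurable_norm).neg
  rw [← lintegral_indicator measurableSet_ball, ← lintegral_indicator (hs measurableSet_Ioi)]
  congr 1
  ext z
  rcases eq_or_ne z 0 with rfl | hz
  · simp only [Set.indicator_apply, hG, ite_self]
  · have hmem : z ∈ ball 0 R ↔ -Real.log R < -Real.log ‖z‖ := by
      rw [mem_ball_zero_iff, neg_lt_neg_iff, Real.log_lt_log_iff (norm_pos_iff.mpr hz) hR]
    simp only [Set.indicator_apply, hmem, mem_preimage, mem_Ioi]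

theorem lintegral_mul_smoothCutoff_of_isRieszMeasureOn {α R : ℝ} (hα0 : 0 ≤ α) (hα1 : α ≤ 1)
    (hR0 : 0 < R) (hR1 : R ≤ 1) {μ : Measure ℂ} [IsFiniteMeasureOnCompacts μ]
    (hμ : IsRieszMeasureOn (ball 0 R) (fun z => -(-Real.log ‖z‖) ^ α) μ) (n : ℕ) :
    ∫⁻ z, ENNReal.ofReal ((-Real.log ‖z‖) ^ α) *
        ENNReal.ofReal (smoothCutoff (-Real.log R) n (-Real.log ‖z‖)) ∂μ =
      ∫⁻ t, ENNReal.ofReal (α * (1 - α) * t ^ (2 * α - 2)) *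
        ENNReal.ofReal (smoothCutoff (-Real.log R) n t) := by
  set c := -Real.log R
  have hc : 0 ≤ c := neg_nonneg.mpr (Real.log_nonpos hR0.le hR1)
  have ha : 0 < c + 1 / (n + 1) := by positivity
  have haR : Real.exp (-(c + 1 / (n + 1))) < R := by
    rw [← Real.exp_log hR0, Real.exp_lt_exp]
    have : (0 : ℝ) < 1 / (n + 1) := by positivity
    linarith
  have hpos : tsupport (smoothCutoff c n) ⊆ Ioi 0 :=
    smoothCutoff.tsupport_subset.trans fun t ht => ha.trans_le ht.1
  have hH0 (t : ℝ) : 0 ≤ t ^ α * smoothCutoff c n t := by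
    rcases le_or_gt t c with ht | ht
    · simp [smoothCutoff.of_le ht]
    · exact mul_nonneg (Real.rpow_nonneg (hc.trans ht.le) _) smoothCutoff.nonneg
  calc _ = ∫⁻ z, ENNReal.ofReal ((-Real.log ‖z‖) ^ α * smoothCutoff c n (-Real.log ‖z‖)) ∂μ := by
        simp only [ENNReal.ofReal_mul' smoothCutoff.nonneg]
    _ = _ := lintegral_comp_neg_log_norm_of_isRieszMeasureOn hα0 hα1 hμ
        (smoothCutoff.contDiff.rpow_const_mul_of_tsupport_subset hpos α) hH0 ha haR
        (tsupport_mul_subset_right.trans smoothCutoff.tsupport_subset)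
    _ = _ := lintegral_congr fun t => ?_
  rcases le_or_gt t c with ht | ht
  · simp [smoothCutoff.of_le ht]
  · rw [← ENNReal.ofReal_mul' smoothCutoff.nonneg, show 2 * α - 2 = (α - 2) + α by ring,
      Real.rpow_add (hc.trans_lt ht)]
    ring_nf

theorem setLIntegral_ball_neg_log_norm_rpow_of_isRieszMeasureOn {α R : ℝ} (hα0 : 0 < α)
    (hα1 : α ≤ 1) (hR0 : 0 < R) (hR1 : R ≤ 1) {μ : Measure ℂ} [IsFiniteMeasureOnCompacts μ]
    (hμ : IsRieszMeasureOn (ball 0 R) (fun z => -(-Real.log ‖z‖) ^ α) μ) :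
    ∫⁻ z in ball 0 R, ENNReal.ofReal ((-Real.log ‖z‖) ^ α) ∂μ =
      ∫⁻ t in Ioi (-Real.log R), ENNReal.ofReal (α * (1 - α) * t ^ (2 * α - 2)) := by
  have hs : Measurable fun z : ℂ => -Real.log ‖z‖ := (Real.measurable_log.comp measurable_norm).neg
  rw [setLIntegral_ball_eq_preimage_neg_log_norm hR0 μ (by simp [Real.zero_rpow hα0.ne'])]
  exact tendsto_nhds_unique
    ((tendsto_lintegral_mul_smoothCutoff μ hs (ENNReal.measurable_ofReal.comp (hs.pow_const α))
      _).congr (lintegral_mul_smoothCutoff_of_isRieszMeasureOn hα0.le hα1 hR0 hR1 hμ))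
    (tendsto_lintegral_mul_smoothCutoff volume measurable_id'
      (ENNReal.measurable_ofReal.comp ((measurable_id.pow_const _).const_mul _)) _)

/-- For `0 < α < 1`, the `L¹`-energy `E₁(u^α) = ∫ (-u^α) dd^c u^α` of the
subharmonic function `u^α(z) = -(-log|z|)^α` on the disc `{|z| < 1-ε}` is finite when
`α < 1/2` and infinite when `1/2 ≤ α`. -/
theorem energy_of_pow_log (α ε : ℝ) (hα0 : 0 < α) (hα1 : α < 1) (hε0 : 0 < ε) (hε1 : ε < 1)
    (u : ℂ → ℝ) (hu : u = fun z : ℂ => -(-Real.log ‖z‖) ^ α)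
    (μ : Measure ℂ) [IsFiniteMeasureOnCompacts μ]
    (hμ : IsRieszMeasureOn (Metric.ball (0:ℂ) (1 - ε)) u μ) :
    (α < 1/2 →
      ∫⁻ z in Metric.ball (0:ℂ) (1 - ε), ENNReal.ofReal (-(u z)) ∂μ < ⊤) ∧
    (1/2 ≤ α →
      ∫⁻ z in Metric.ball (0:ℂ) (1 - ε), ENNReal.ofReal (-(u z)) ∂μ = ⊤) := by
  subst hu
  have hR0 : 0 < 1 - ε := by linarith
  have hc : 0 < -Real.log (1 - ε) := neg_pos.mpr (Real.log_neg hR0 (by linarith))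
  have hk : 0 < α * (1 - α) := mul_pos hα0 (by linarith)
  have hfinite := lintegral_Ioi_ofReal_const_mul_rpow_lt_top_iff (p := 2 * α - 2) hc hk
  simp only [neg_neg]
  rw [setLIntegral_ball_neg_log_norm_rpow_of_isRieszMeasureOn hα0 hα1.le hR0 (by linarith) hμ]
  exact ⟨fun h => hfinite.mpr (by linarith),
    fun h => not_lt_top_iff.mp (mt hfinite.mp (by linarith))⟩

end
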